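/- In a terminal configuration of Algorithm RSP, every process belonging to a connected component of G not containing the root r has status I. -/
import Mathlib


open Classical

inductive RStatus : Type
  | I | C | EB | EF
deriving DecidableEq

inductive RRule : Type
  | RC | REB | REF | RI | RR
deriving DecidableEq

/-- A network: a finite simple graph with a distinguished root and
strictly positive symmetric edge weights. -/
structure Network (V : Type) [Fintype V] [DecidableEq V] where
  G : SimpleGraph V
  r : V
  w : V → V → ℝ
  w_symm : ∀ u v : V, w u v = w v u
  w_pos : ∀ u v : V, G.Adj u v → 0 < w u v

/-- A configuration: each process has a status, a parent pointer and a distance value. -/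
structure Config (V : Type) where
  st : V → RStatus
  par : V → V
  d : V → ℝ

variable {V : Type} [Fintype V] [DecidableEq V]

/-- The root's variables are constants: status C and distance 0. -/
def RootConst (N : Network V) (γ : Config V) : Prop :=
  γ.st N.r = RStatus.C ∧ γ.d N.r = 0

/-- v ∈ children(u). -/
def childOf (N : Network V) (γ : Config V) (u v : V) : Prop :=
  N.G.Adj u v ∧ γ.st u ≠ RStatus.I ∧ γ.st v ≠ RStatus.I ∧ γ.par v = u ∧
    γ.d v ≥ γ.d u + N.w v u ∧ (γ.st v = γ.st u ∨ γ.st u = RStatus.EB)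

/-- u is an abnormal root. -/
def abRoot (N : Network V) (γ : Config V) (u : V) : Prop :=
  u ≠ N.r ∧ γ.st u ≠ RStatus.I ∧
    (¬ N.G.Adj u (γ.par u) ∨ γ.st (γ.par u) = RStatus.I ∨
     γ.d u < γ.d (γ.par u) + N.w u (γ.par u) ∨
     (γ.st u ≠ γ.st (γ.par u) ∧ γ.st (γ.par u) ≠ RStatus.EB))

def PReset (N : Network V) (γ : Config V) (u : V) : Prop :=
  γ.st u = RStatus.EF ∧ abRoot N γ u

def PCorrection (N : Network V) (γ : Config V) (u : V) : Prop :=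
  ∃ v : V, N.G.Adj u v ∧ γ.st v = RStatus.C ∧ γ.d v + N.w u v < γ.d u

def guardRC (N : Network V) (γ : Config V) (u : V) : Prop :=
  u ≠ N.r ∧ γ.st u = RStatus.C ∧ PCorrection N γ u

def guardREB (N : Network V) (γ : Config V) (u : V) : Prop :=
  u ≠ N.r ∧ γ.st u = RStatus.C ∧ ¬ PCorrection N γ u ∧
    (abRoot N γ u ∨ γ.st (γ.par u) = RStatus.EB)

def guardREF (N : Network V) (γ : Config V) (u : V) : Prop :=
  u ≠ N.r ∧ γ.st u = RStatus.EB ∧ ∀ v : V, childOf N γ u v → γ.st v = RStatus.EF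

def guardRI (N : Network V) (γ : Config V) (u : V) : Prop :=
  u ≠ N.r ∧ PReset N γ u ∧ ∀ v : V, N.G.Adj u v → γ.st v ≠ RStatus.C

def guardRR (N : Network V) (γ : Config V) (u : V) : Prop :=
  u ≠ N.r ∧ (PReset N γ u ∨ γ.st u = RStatus.I) ∧
    ∃ v : V, N.G.Adj u v ∧ γ.st v = RStatus.C

/-- The effect of the macro computePath at u in the step γ → γ'. -/
def ComputePath (N : Network V) (γ γ' : Config V) (u : V) : Prop :=
  N.G.Adj u (γ'.par u) ∧ γ.st (γ'.par u) = RStatus.C ∧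
  (∀ v : V, N.G.Adj u v → γ.st v = RStatus.C →
      γ.d (γ'.par u) + N.w u (γ'.par u) ≤ γ.d v + N.w u v) ∧
  γ'.d u = γ.d (γ'.par u) + N.w u (γ'.par u) ∧ γ'.st u = RStatus.C

/-- u executes the given rule during the step γ → γ'. -/
def ExecRule (N : Network V) (γ γ' : Config V) (u : V) : RRule → Prop
  | RRule.RC => guardRC N γ u ∧ ComputePath N γ γ' u
  | RRule.REB => guardREB N γ u ∧ γ'.st u = RStatus.EB ∧ γ'.par u = γ.par u ∧ γ'.d u = γ.d u
  | RRule.REF => guardREF N γ u ∧ γ'.st u = RStatus.EF ∧ γ'.par u = γ.par u ∧ γ'.d u = γ.d u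
  | RRule.RI => guardRI N γ u ∧ γ'.st u = RStatus.I ∧ γ'.par u = γ.par u ∧ γ'.d u = γ.d u
  | RRule.RR => guardRR N γ u ∧ ComputePath N γ γ' u

def EnabledAt (N : Network V) (γ : Config V) (u : V) : Prop :=
  guardRC N γ u ∨ guardREB N γ u ∨ guardREF N γ u ∨ guardRI N γ u ∨ guardRR N γ u

/-- A step of the distributed (unfair) daemon: a nonempty set of enabled processes
each atomically executes one of its enabled rules; other processes are unchanged. -/
def Step (N : Network V) (γ γ' : Config V) : Prop :=
  ∃ S : Set V, S.Nonempty ∧ (∀ u ∈ S, ∃ ρ : RRule, ExecRule N γ γ' u ρ) ∧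
    ∀ u : V, u ∉ S → γ'.st u = γ.st u ∧ γ'.par u = γ.par u ∧ γ'.d u = γ.d u

def Terminal (N : Network V) (γ : Config V) : Prop :=
  ∀ u : V, ¬ EnabledAt N γ u

/-- Weight of a walk. -/
noncomputable def walkWeight (N : Network V) {u v : V} (p : N.G.Walk u v) : ℝ :=
  (p.darts.map (fun e => N.w e.toProd.1 e.toProd.2)).sum

/-- x is the weighted distance from u to v in the graph. -/
def IsWDistBetween (N : Network V) (u v : V) (x : ℝ) : Prop :=
  (∃ p : N.G.Walk u v, walkWeight N p = x) ∧ ∀ p : N.G.Walk u v, x ≤ walkWeight N p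

/-- x is the weighted distance d(u,r). -/
def IsWDist (N : Network V) (u : V) (x : ℝ) : Prop :=
  IsWDistBetween N u N.r x

/-- k is the hop-distance between u and v: the minimum number of edges
of a minimum-weight path from u to v. -/
def IsHopDist (N : Network V) (u v : V) (k : ℕ) : Prop :=
  (∃ p : N.G.Walk u v, p.length = k ∧ ∀ q : N.G.Walk u v, walkWeight N p ≤ walkWeight N q) ∧
  (∀ p : N.G.Walk u v, (∀ q : N.G.Walk u v, walkWeight N p ≤ walkWeight N q) → k ≤ p.length)

/-- Legitimate state of a process. -/
def LegitState (N : Network V) (γ : Config V) (u : V) : Prop :=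
  u = N.r ∨
  (N.G.Reachable u N.r ∧ γ.st u = RStatus.C ∧ IsWDist N u (γ.d u) ∧
     N.G.Adj u (γ.par u) ∧ γ.d u = γ.d (γ.par u) + N.w u (γ.par u)) ∨
  (¬ N.G.Reachable u N.r ∧ γ.st u = RStatus.I)

def Legitimate (N : Network V) (γ : Config V) : Prop :=
  ∀ u : V, LegitState N γ u

/-- An execution: an infinite sequence of configurations (stuttering once terminal),
all respecting the root constants, consecutive ones related by steps. -/
def IsExec (N : Network V) (e : ℕ → Config V) : Prop :=
  (∀ i : ℕ, RootConst N (e i)) ∧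
  ∀ i : ℕ, Step N (e i) (e (i+1)) ∨ (Terminal N (e i) ∧ e (i+1) = e i)

/-- u executes some rule at step j of execution e. -/
def ExecAt (N : Network V) (e : ℕ → Config V) (j : ℕ) (u : V) : Prop :=
  ∃ ρ : RRule, ExecRule N (e j) (e (j+1)) u ρ

/-- u executes computePath (rule R_C or R_R) at step j. -/
def CPExec (N : Network V) (e : ℕ → Config V) (j : ℕ) (u : V) : Prop :=
  ExecRule N (e j) (e (j+1)) u RRule.RC ∨ ExecRule N (e j) (e (j+1)) u RRule.RR

def AliveAbRoot (N : Network V) (γ : Config V) (u : V) : Prop :=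
  abRoot N γ u ∧ γ.st u ≠ RStatus.EF

/-- Step j is a u-segment break: some non-root process of V_u ceases to be
an alive abnormal root during step j. -/
def SegBreak (N : Network V) (e : ℕ → Config V) (u : V) (j : ℕ) : Prop :=
  ∃ v : V, v ≠ N.r ∧ N.G.Reachable v u ∧
    AliveAbRoot N (e j) v ∧ ¬ AliveAbRoot N (e (j+1)) v

/-- n_maxCC: the maximum number of non-root processes in a connected component. -/
noncomputable def nmaxCC (N : Network V) : ℕ :=
  sSup {k : ℕ | ∃ v : V, k = {x : V | x ≠ N.r ∧ N.G.Reachable x v}.ncard}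

/-- The interval of steps [s, t) is a u-segment of the execution e
(t = ⊤ encodes a final, unbroken segment). -/
def IsSegment (N : Network V) (e : ℕ → Config V) (u : V) (s : ℕ) (t : ℕ∞) : Prop :=
  (s : ℕ∞) < t ∧ (s = 0 ∨ SegBreak N e u (s-1)) ∧
  (∀ j : ℕ, s ≤ j → ((j : ℕ∞) + 1 < t) → ¬ SegBreak N e u j) ∧
  (∀ m : ℕ, t = (m : ℕ∞) → SegBreak N e u (m-1))

/-- A causal chain of k+1 actions a_1,…,a_{k+1} in the window [s,t):
a_{i} occurs at time τ i, is a computePath execution by process p (i+1)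
setting its parent to p i; a_1 occurs no later than any action of p 0,
and each a_{i+1} occurs after a_i but no later than the next action of a_i's executor. -/
structure IsCausalChain (N : Network V) (e : ℕ → Config V) (s : ℕ) (t : ℕ∞)
    (k : ℕ) (τ : Fin (k+1) → ℕ) (p : Fin (k+2) → V) : Prop where
  mono : StrictMono τ
  lb : ∀ i : Fin (k+1), s ≤ τ i
  ub : ∀ i : Fin (k+1), (τ i : ℕ∞) < t
  cp : ∀ i : Fin (k+1), CPExec N e (τ i) (p i.succ) ∧ (e (τ i + 1)).par (p i.succ) = p i.castSucc
  root_first : ∀ j : ℕ, s ≤ j → j < τ 0 → ¬ ExecAt N e j (p 0)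
  between : ∀ i : Fin k, ∀ j : ℕ, τ i.castSucc < j → j < τ i.succ →
      ¬ ExecAt N e j (p i.castSucc.succ)

/-- A maximal causal chain: a causal chain that cannot be extended by a further action. -/
def IsMaxCausalChain (N : Network V) (e : ℕ → Config V) (s : ℕ) (t : ℕ∞)
    (k : ℕ) (τ : Fin (k+1) → ℕ) (p : Fin (k+2) → V) : Prop :=
  IsCausalChain N e s t k τ p ∧
  ¬ ∃ (j : ℕ) (v : V), τ (Fin.last k) < j ∧ (j : ℕ∞) < t ∧ CPExec N e j v ∧
      (e (j+1)).par v = p (Fin.last (k+1)) ∧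
      ∀ j' : ℕ, τ (Fin.last k) < j' → j' < j → ¬ ExecAt N e j' (p (Fin.last (k+1)))

/-- S_{seg,v}: the set of distance values produced by actions of maximal
causal chains rooted at v of the segment [s,t). -/
def SSeg (N : Network V) (e : ℕ → Config V) (s : ℕ) (t : ℕ∞) (v : V) : Set ℝ :=
  {x : ℝ | ∃ (k : ℕ) (τ : Fin (k+1) → ℕ) (p : Fin (k+2) → V),
      IsMaxCausalChain N e s t k τ p ∧ p 0 = v ∧
      ∃ i : Fin (k+1), x = (e (τ i + 1)).d (p i.succ)}

def Neutralized (N : Network V) (e : ℕ → Config V) (j : ℕ) (u : V) : Prop :=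
  EnabledAt N (e j) u ∧ ¬ EnabledAt N (e (j+1)) u

/-- Every process enabled at time s executes or is neutralized before time t. -/
def CompletesRound (N : Network V) (e : ℕ → Config V) (s t : ℕ) : Prop :=
  s ≤ t ∧ ∀ u : V, EnabledAt N (e s) u →
    ∃ j : ℕ, s ≤ j ∧ j < t ∧ (ExecAt N e j u ∨ Neutralized N e j u)

/-- roundEnd e k: the time at which the k-th round ends (the beginning of round k+1). -/
noncomputable def roundEnd (N : Network V) (e : ℕ → Config V) : ℕ → ℕ
  | 0 => 0
  | k+1 => sInf {t : ℕ | CompletesRound N e (roundEnd N e k) t}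

/-- b 0, b 1, …, b k is a branch: b 0 is the root r or an abnormal root,
and each b (i+1) is a child of b i; b i is at depth i+1. -/
def IsBranch (N : Network V) (γ : Config V) (k : ℕ) (b : Fin (k+1) → V) : Prop :=
  (b 0 = N.r ∨ abRoot N γ (b 0)) ∧ ∀ i : Fin k, childOf N γ (b i.castSucc) (b i.succ)

/-- Membership in the regular language (R_I + ε)(R_R + ε)R_C*(R_EB + ε)(R_EF + ε). -/
def InRSPLang (l : List RRule) : Prop :=
  ∃ a b c d f : List RRule, l = a ++ b ++ c ++ d ++ f ∧
    (a = [] ∨ a = [RRule.RI]) ∧ (b = [] ∨ b = [RRule.RR]) ∧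
    (∀ x ∈ c, x = RRule.RC) ∧ (d = [] ∨ d = [RRule.REB]) ∧ (f = [] ∨ f = [RRule.REF])

/-- In a terminal configuration, every process in a connected
component not containing the root has status I. -/
theorem stmt1 (N : Network V) (γ : Config V) (hroot : RootConst N γ)
    (hterm : Terminal N γ) :
    ∀ u : V, ¬ N.G.Reachable u N.r → γ.st u = RStatus.I := by
  classical
  have claimA : ∀ v : V, v ≠ N.r → γ.st v = RStatus.C →
      ¬ abRoot N γ v ∧ γ.st (γ.par v) ≠ RStatus.EB := by
    intro v hv hst
    have h1 := hterm v
    simp only [EnabledAt, not_or] at h1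
    obtain ⟨hRC, hREB, -, -, -⟩ := h1
    have hpc : ¬ PCorrection N γ v := fun hp => hRC ⟨hv, hst, hp⟩
    have hdis : ¬ (abRoot N γ v ∨ γ.st (γ.par v) = RStatus.EB) :=
      fun h => hREB ⟨hv, hst, hpc, h⟩
    exact ⟨fun h => hdis (Or.inl h), fun h => hdis (Or.inr h)⟩
  have noEB : ∀ v : V, ¬ N.G.Reachable v N.r → γ.st v ≠ RStatus.EB := by
    by_contra h
    push_neg at h
    obtain ⟨v0, hv0r, hv0⟩ := h
    let S : Finset V :=
      Finset.univ.filter (fun v => ¬ N.G.Reachable v N.r ∧ γ.st v = RStatus.EB)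
    have hS : S.Nonempty := ⟨v0, by simp [S, hv0r, hv0]⟩
    obtain ⟨w, hwS, hmax⟩ := S.exists_max_image γ.d hS
    simp only [S, Finset.mem_filter, Finset.mem_univ, true_and] at hwS
    obtain ⟨hwr, hwEB⟩ := hwS
    have hwne : w ≠ N.r := fun h => hwr (h ▸ SimpleGraph.Reachable.refl _)
    have h1 := hterm w
    simp only [EnabledAt, not_or] at h1
    obtain ⟨-, -, hREF, -, -⟩ := h1
    have hch : ¬ ∀ x, childOf N γ w x → γ.st x = RStatus.EF :=
      fun h => hREF ⟨hwne, hwEB, h⟩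
    push_neg at hch
    obtain ⟨x, hcx, hxEF⟩ := hch
    obtain ⟨hadj, -, hxI, hpar, hd, -⟩ := hcx
    have hxr : ¬ N.G.Reachable x N.r := fun h => hwr (hadj.reachable.trans h)
    have hxne : x ≠ N.r := fun h => hxr (h ▸ SimpleGraph.Reachable.refl _)
    cases hstx : γ.st x with
    | I => exact hxI hstx
    | EF => exact hxEF hstx
    | EB =>
      have hxS : x ∈ S := by simp [S, hxr, hstx]
      have h2 := hmax x hxS
      have hw : 0 < N.w x w := N.w_pos x w hadj.symm
      linarith
    | C =>
      have h2 := (claimA x hxne hstx).2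
      rw [hpar] at h2
      exact h2 hwEB
  have noAb : ∀ v : V, ¬ N.G.Reachable v N.r → ¬ abRoot N γ v := by
    intro v hvr hab
    have hvne := hab.1
    have hvI := hab.2.1
    cases hstv : γ.st v with
    | I => exact hvI hstv
    | C => exact (claimA v hvne hstv).1 hab
    | EB => exact noEB v hvr hstv
    | EF =>
      have h1 := hterm v
      simp only [EnabledAt, not_or] at h1
      obtain ⟨-, -, -, hRI, hRR⟩ := h1
      by_cases hc : ∃ x, N.G.Adj v x ∧ γ.st x = RStatus.C
      · exact hRR ⟨hvne, Or.inl ⟨hstv, hab⟩, hc⟩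
      · push_neg at hc
        exact hRI ⟨hvne, ⟨hstv, hab⟩, fun x hx => hc x hx⟩
  intro u hur
  by_contra hu
  let S : Finset V :=
    Finset.univ.filter (fun v => ¬ N.G.Reachable v N.r ∧ γ.st v ≠ RStatus.I)
  have hS : S.Nonempty := ⟨u, by simp [S, hur, hu]⟩
  obtain ⟨w, hwS, hmin⟩ := S.exists_min_image γ.d hS
  simp only [S, Finset.mem_filter, Finset.mem_univ, true_and] at hwS
  obtain ⟨hwr, hwI⟩ := hwS
  have hwne : w ≠ N.r := fun h => hwr (h ▸ SimpleGraph.Reachable.refl _)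
  have hdis : ¬ (¬ N.G.Adj w (γ.par w) ∨ γ.st (γ.par w) = RStatus.I ∨
      γ.d w < γ.d (γ.par w) + N.w w (γ.par w) ∨
      (γ.st w ≠ γ.st (γ.par w) ∧ γ.st (γ.par w) ≠ RStatus.EB)) :=
    fun h => noAb w hwr ⟨hwne, hwI, h⟩
  push_neg at hdis
  obtain ⟨hadj, hpI, hdge, -⟩ := hdis
  have hpr : ¬ N.G.Reachable (γ.par w) N.r :=
    fun h => hwr (hadj.reachable.trans h)
  have hpS : γ.par w ∈ S := by simp [S, hpr, hpI]
  have h2 := hmin _ hpS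
  have hw : 0 < N.w w (γ.par w) := N.w_pos _ _ hadj
  linarith
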